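/- Suppose F : ℍⁿ → X satisfies all hypotheses of the criteria lemma, and additionally there exists a constant C₀ such that for every vertical triangle T (over horizontal coordinates x ≠ x', with midpoint of the third side at height t(r)) the displaced height satisfies t(r) - h(T) ≤ C₀. Then for any p = (x,t(p)), q = (x',t(q)) with t(p) ≥ h(T) - C₁ (where C₁ = 2C₀ + 5Δ + 1), letting q' = (x', max{t(p),t(r)}), one has |d_ℍ(p,q) - |t(q') - t(q)|| ≤ C₀ + C₁ + 2 and |d_X(F(p),F(q)) - |t(q')-t(q)|| ≤ C₀ + C₁ + 2R/ε + R. -/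

import Mathlib

/-!
The horizontal displacement bound makes the vertical geodesics over `x` and `x'` stay within
`2R/ε + R` of each other from the height `t(r)` upwards, so `h(T) ≤ t(r)`; together with
`t(r) - h(T) ≤ C₀` and `t(p) ≥ h(T) - C₁` this puts `p` at most `C₀ + C₁` below the height
`max (t p) (t r)` of `q'`. Going from `p` up to that height, across to `q'` and down to `q` then
estimates `d_X(F p, F q)`. In `ℍⁿ` the closed formula
`cosh d((x,s),(x',t)) = cosh (s - t) + |x - x'|² / (2 eˢ eᵗ)` gives `|s - t| ≤ d ≤ N + log 6`,
where `N` bounds both `|s - t|` and `2 t(r) - s - t`.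
-/

/-- The inverse hyperbolic cosine. -/
noncomputable def arcosh (x : ℝ) : ℝ := Real.log (x + Real.sqrt (x ^ 2 - 1))

/-- Hyperbolic distance in the exponential model `ℝ^{n-1} × ℝ` with metric
`ds² = e^{-2t}|dx|² + dt²` (closed formula). -/
noncomputable def hypDist {m : ℕ} (p q : EuclideanSpace ℝ (Fin m) × ℝ) : ℝ :=
  arcosh (1 + (dist p.1 q.1 ^ 2 + (Real.exp p.2 - Real.exp q.2) ^ 2) /
    (2 * Real.exp p.2 * Real.exp q.2))

lemma arcosh_eq_real_arcosh : arcosh = Real.arcosh := rfl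

open Real

lemma Real.arcosh_le_log_two_mul {v : ℝ} (hv : 1 ≤ v) : Real.arcosh v ≤ log (2 * v) := by
  have h : √(v ^ 2 - 1) ≤ v := by
    calc √(v ^ 2 - 1) ≤ √(v ^ 2) := sqrt_le_sqrt (by linarith)
      _ = v := sqrt_sq (by linarith)
  exact log_le_log (by positivity) (by linarith)

lemma cosh_le_exp_abs (a : ℝ) : cosh a ≤ exp |a| := by
  rw [cosh_eq]
  have h₁ : exp a ≤ exp |a| := exp_le_exp.mpr (le_abs_self a)
  have h₂ : exp (-a) ≤ exp |a| := exp_le_exp.mpr (neg_le_abs a)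
  linarith

lemma log_six_le_two : log 6 ≤ 2 := by
  rw [log_le_iff_le_exp (by norm_num), show (2 : ℝ) = 1 + 1 by norm_num, exp_add]
  nlinarith [exp_one_gt_d9]

section Hyperbolic

variable {m : ℕ} (x x' : EuclideanSpace ℝ (Fin m))

lemma hypDist_eq_arcosh (s t : ℝ) :
    hypDist (x, s) (x', t) = Real.arcosh (cosh (s - t) + dist x x' ^ 2 / (2 * exp s * exp t)) := by
  rw [hypDist, arcosh_eq_real_arcosh, cosh_eq, exp_sub, neg_sub, exp_sub]
  congr 1
  field_simp
  ring

lemma abs_sub_le_hypDist (s t : ℝ) : |s - t| ≤ hypDist (x, s) (x', t) := by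
  rw [hypDist_eq_arcosh, ← cosh_abs]
  calc |s - t| = Real.arcosh (cosh |s - t|) := (arcosh_cosh (abs_nonneg _)).symm
    _ ≤ _ := (arcosh_le_arcosh (cosh_pos _) (by positivity)).mpr
      (le_add_of_nonneg_right (by positivity))

variable {x x'} {tr : ℝ} (hx : dist x x' = 2 * exp tr)
include hx

lemma hypDist_le_max_add_two (s t : ℝ) :
    hypDist (x, s) (x', t) ≤ max |s - t| (2 * tr - s - t) + 2 := by
  set N := max |s - t| (2 * tr - s - t)
  set A := cosh (s - t) + dist x x' ^ 2 / (2 * exp s * exp t)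
  have hsep : dist x x' ^ 2 / (2 * exp s * exp t) = 2 * exp (2 * tr - s - t) := by
    rw [hx, show 2 * tr - s - t = tr + tr - s - t by ring, exp_sub, exp_sub, exp_add]
    field_simp
  have hA1 : 1 ≤ A := le_add_of_le_of_nonneg (one_le_cosh _) (by positivity)
  have hA : A ≤ 3 * exp N := by
    have h₁ : cosh (s - t) ≤ exp N := (cosh_le_exp_abs _).trans (exp_le_exp.mpr (le_max_left _ _))
    have h₂ : exp (2 * tr - s - t) ≤ exp N := exp_le_exp.mpr (le_max_right _ _)
    simp only [A, hsep]
    linarith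
  calc hypDist (x, s) (x', t) = Real.arcosh A := hypDist_eq_arcosh x x' s t
    _ ≤ log (2 * A) := arcosh_le_log_two_mul hA1
    _ ≤ log (6 * exp N) := log_le_log (by linarith) (by linarith)
    _ = log 6 + N := by rw [log_mul (by norm_num) (exp_ne_zero _), log_exp]
    _ ≤ N + 2 := by linarith [log_six_le_two]

lemma abs_hypDist_sub_abs_le {K s : ℝ} (hK : 0 ≤ K) (hs : tr - K ≤ s) (t : ℝ) :
    |hypDist (x, s) (x', t) - (|max s tr - t|)| ≤ K + 2 := by
  set M := max s tr
  have hMs : M - s ≤ K := sub_le_iff_le_add'.mpr (max_le (by linarith) (by linarith))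
  have hsM : s ≤ M := le_max_left _ _
  have h₁ : |s - t| ≤ |s - M| + |M - t| := abs_sub_le s M t
  have h₂ : |M - t| ≤ |M - s| + |s - t| := abs_sub_le M s t
  rw [abs_sub_comm s M, abs_of_nonneg (by linarith : 0 ≤ M - s)] at h₁
  rw [abs_of_nonneg (by linarith : 0 ≤ M - s)] at h₂
  have hup : max |s - t| (2 * tr - s - t) ≤ |M - t| + K :=
    max_le (by linarith) (by linarith [le_abs_self (M - t), le_max_right s tr])
  have hlow := abs_sub_le_hypDist x x' s t
  have hupper := hypDist_le_max_add_two hx s t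
  rw [abs_le]
  constructor <;> linarith

end Hyperbolic

lemma exp_neg_mul_dist_le_two {m : ℕ} {x x' : EuclideanSpace ℝ (Fin m)} {tr M : ℝ}
    (hx : dist x x' = 2 * exp tr) (hM : tr ≤ M) : exp (-M) * dist x x' ≤ 2 := by
  calc exp (-M) * dist x x' = 2 * exp (tr - M) := by rw [hx, sub_eq_neg_add, exp_add]; ring
    _ ≤ 2 := mul_le_of_le_one_right two_pos.le (exp_le_one_iff.mpr (by linarith))

lemma abs_dist_sub_abs_le_of_isometry {X : Type*} [PseudoMetricSpace X] {f g : ℝ → X}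
    (hf : Isometry f) (hg : Isometry g) {s M c : ℝ} (hsM : s ≤ M) (hM : dist (f M) (g M) ≤ c)
    (t : ℝ) : |dist (f s) (g t) - (|M - t|)| ≤ M - s + c := by
  have h := abs_dist_sub_le (f s) (g M) (g t)
  rw [hg.dist_eq, Real.dist_eq] at h
  calc _ ≤ dist (f s) (g M) := h
    _ ≤ dist (f s) (f M) + dist (f M) (g M) := dist_triangle _ _ _
    _ ≤ M - s + c := by
      rw [hf.dist_eq, Real.dist_eq, abs_sub_comm, abs_of_nonneg (by linarith)]
      linarith

theorem criteria_case_one_general {X : Type*} [MetricSpace X] {m : ℕ}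
    (δ ε R : ℝ) (hε : 0 < ε) (hR : 0 < R)
    (F : EuclideanSpace ℝ (Fin m) × ℝ → X)
    (h1 : ∀ (x : EuclideanSpace ℝ (Fin m)) (s t : ℝ),
      dist (F (x, s)) (F (x, t)) = |s - t|)
    (h3 : ∀ (x x' : EuclideanSpace ℝ (Fin m)) (t : ℝ),
      dist (F (x, t)) (F (x', t)) ≤ (R / ε) * (Real.exp (-t) * dist x x') + R)
    (Δ : ℝ) (hΔ : Δ = max (3 * δ) (2 * R / ε + R))
    (x x' : EuclideanSpace ℝ (Fin m)) (hxx : x ≠ x')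
    -- the height of the midpoint (highest point) of the third side of the triangle
    (tr : ℝ) (htr : tr = Real.log (dist x x' / 2))
    -- the displaced height of the triangle
    (hT : ℝ)
    (hmin : ∀ t : ℝ,
      (Metric.infDist (F (x, t)) (Set.range fun s => F (x', s)) ≤ Δ ∨
        Metric.infDist (F (x', t)) (Set.range fun s => F (x, s)) ≤ Δ) → hT ≤ t)
    (C₀ : ℝ) (hC0 : tr - hT ≤ C₀)
    (C₁ : ℝ) (hC1 : C₁ = 2 * C₀ + 5 * Δ + 1)
    (tp tq : ℝ) (hcase : tp ≥ hT - C₁) :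
    |hypDist (x, tp) (x', tq) - (|max tp tr - tq|)| ≤ C₀ + C₁ + 2 ∧
    |dist (F (x, tp)) (F (x', tq)) - (|max tp tr - tq|)| ≤
      C₀ + C₁ + 2 * R / ε + R := by
  have hx : dist x x' = 2 * exp tr := by
    rw [htr, exp_log (div_pos (dist_pos.mpr hxx) two_pos)]
    ring
  have hhoriz : ∀ M, tr ≤ M → dist (F (x, M)) (F (x', M)) ≤ 2 * R / ε + R := fun M hM => by
    have := mul_le_mul_of_nonneg_left (exp_neg_mul_dist_le_two hx hM) (div_pos hR hε).le
    linarith [h3 x x' M, show R / ε * 2 = 2 * R / ε by ring]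
  have hΔ' : 2 * R / ε + R ≤ Δ := hΔ ▸ le_max_right _ _
  have hT_le : hT ≤ tr := hmin tr <| Or.inl <|
    (Metric.infDist_le_dist_of_mem (Set.mem_range_self tr)).trans ((hhoriz tr le_rfl).trans hΔ')
  have hK : 0 ≤ C₀ + C₁ := by
    have : 0 < 2 * R / ε + R := by positivity
    rw [hC1]; linarith
  have hbelow : tr - (C₀ + C₁) ≤ tp := by linarith
  refine ⟨abs_hypDist_sub_abs_le hx hK hbelow tq, ?_⟩
  have hvert : ∀ y, Isometry fun s => F (y, s) := fun y =>
    Isometry.of_dist_eq fun s t => by rw [h1, Real.dist_eq]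
  have hclimb : max tp tr - tp ≤ C₀ + C₁ :=
    sub_le_iff_le_add'.mpr (max_le (by linarith) (by linarith))
  have := abs_dist_sub_abs_le_of_isometry (hvert x) (hvert x') (le_max_left tp tr)
    (hhoriz _ (le_max_right _ _)) tq
  linarith

/-- Case 1 of the criteria lemma: with a uniform bound `C₀` on
`t(r) - h(T)` over the vertical triangle `T` over `x ≠ x'`, for `p = (x,t(p))`,
`q = (x',t(q))` with `t(p) ≥ h(T) - C₁` where `C₁ = 2C₀ + 5Δ + 1`, and
`q' = (x', max{t(p), t(r)})`, both `d_ℍ(p,q)` and `d_X(F(p),F(q))` are estimated by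
`|t(q') - t(q)|` up to the stated additive errors. -/
theorem criteria_case_one {X : Type*} [MetricSpace X] {m : ℕ}
    (δ ε R : ℝ) (hδ : 0 < δ) (hε : 0 < ε) (hR : 0 < R)
    (F : EuclideanSpace ℝ (Fin m) × ℝ → X)
    (h1 : ∀ (x : EuclideanSpace ℝ (Fin m)) (s t : ℝ),
      dist (F (x, s)) (F (x, t)) = |s - t|)
    (h2 : ∀ x x' : EuclideanSpace ℝ (Fin m), x ≠ x' → ∃ Rside : ℝ → X,
      (∀ s t : ℝ, dist (Rside s) (Rside t) = |s - t|) ∧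
      (∀ s : ℝ, Metric.infDist (F (x, s))
        (Set.range (fun u => F (x', u)) ∪ Set.range Rside) ≤ δ) ∧
      (∀ s : ℝ, Metric.infDist (F (x', s))
        (Set.range (fun u => F (x, u)) ∪ Set.range Rside) ≤ δ) ∧
      (∀ s : ℝ, Metric.infDist (Rside s)
        (Set.range (fun u => F (x, u)) ∪ Set.range (fun u => F (x', u))) ≤ δ))
    (h3 : ∀ (x x' : EuclideanSpace ℝ (Fin m)) (t : ℝ),
      dist (F (x, t)) (F (x', t)) ≤ (R / ε) * (Real.exp (-t) * dist x x') + R)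
    (Δ : ℝ) (hΔ : Δ = max (3 * δ) (2 * R / ε + R))
    (x x' : EuclideanSpace ℝ (Fin m)) (hxx : x ≠ x')
    -- the height of the midpoint (highest point) of the third side of the triangle
    (tr : ℝ) (htr : tr = Real.log (dist x x' / 2))
    -- the displaced height of the triangle
    (hT : ℝ)
    (hmem : Metric.infDist (F (x, hT)) (Set.range fun s => F (x', s)) ≤ Δ ∨
      Metric.infDist (F (x', hT)) (Set.range fun s => F (x, s)) ≤ Δ)
    (hmin : ∀ t : ℝ,
      (Metric.infDist (F (x, t)) (Set.range fun s => F (x', s)) ≤ Δ ∨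
        Metric.infDist (F (x', t)) (Set.range fun s => F (x, s)) ≤ Δ) → hT ≤ t)
    (C₀ : ℝ) (hC0 : tr - hT ≤ C₀)
    (C₁ : ℝ) (hC1 : C₁ = 2 * C₀ + 5 * Δ + 1)
    (tp tq : ℝ) (hcase : tp ≥ hT - C₁) :
    |hypDist (x, tp) (x', tq) - (|max tp tr - tq|)| ≤ C₀ + C₁ + 2 ∧
    |dist (F (x, tp)) (F (x', tq)) - (|max tp tr - tq|)| ≤
      C₀ + C₁ + 2 * R / ε + R :=
  criteria_case_one_general δ ε R hε hR F h1 h3 Δ hΔ x x' hxx tr htr hT hmin C₀ hC0 C₁ hC1 tp tq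
    hcase
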